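/- Let Φ be a Young function and μ_n, μ probability measures on ℝ such that the quantile functions satisfy q_n → q Lebesgue-a.e. on (0,1) and ∫_0^1 Φ(2k q_n^+) + Φ(2k q_n^−) du → ∫_0^1 Φ(2kq^+) + Φ(2kq^−) du < ∞ for a fixed k > 0. Then the family {Φ(k|q_n − q|) : n ≥ n₀} is uniformly integrable for some n₀, and ∫_0^1 Φ(k|q_n − q|) du → 0. -/

import Mathlib

open MeasureTheory Filter Set Topology

noncomputable section

/-- A Young function: even, convex, vanishing exactly at 0, nondecreasing on ℝ₊,
tending to ∞ at ∞. -/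
def IsYoung (Φ : ℝ → ℝ) : Prop :=
  (∀ x, Φ (-x) = Φ x) ∧ ConvexOn ℝ Set.univ Φ ∧ Φ 0 = 0 ∧
  (∀ x, x ≠ 0 → 0 < Φ x) ∧ MonotoneOn Φ (Set.Ici 0) ∧
  Filter.Tendsto Φ Filter.atTop Filter.atTop

/-- A conjugate pair of Young functions, characterised by Young's inequality
`a*b ≤ Φ a + Ψ b`. -/
def IsConjugatePair (Φ Ψ : ℝ → ℝ) : Prop :=
  IsYoung Φ ∧ IsYoung Ψ ∧
  (∀ a b : ℝ, 0 ≤ a → 0 ≤ b → a * b ≤ Φ a + Ψ b)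

/-- Membership in the Orlicz space `L^Φ`: `E[Φ(kξ)] < ∞` for some `k > 0`. -/
def MemLOrlicz {Ω : Type*} [MeasurableSpace Ω] (Φ : ℝ → ℝ) (P : Measure Ω) (ξ : Ω → ℝ) : Prop :=
  Measurable ξ ∧ ∃ k : ℝ, 0 < k ∧ Integrable (fun ω => Φ (k * ξ ω)) P

/-- Membership in the Orlicz heart `M^Φ`: `E[Φ(kξ)] < ∞` for every `k > 0`. -/
def MemMOrlicz {Ω : Type*} [MeasurableSpace Ω] (Φ : ℝ → ℝ) (P : Measure Ω) (ξ : Ω → ℝ) : Prop :=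
  Measurable ξ ∧ ∀ k : ℝ, 0 < k → Integrable (fun ω => Φ (k * ξ ω)) P

/-- The Luxemburg norm `inf {α > 0 : E[Φ(ξ/α)] ≤ 1}`. -/
def luxNorm {Ω : Type*} [MeasurableSpace Ω] (Φ : ℝ → ℝ) (P : Measure Ω) (ξ : Ω → ℝ) : ℝ :=
  sInf {α : ℝ | 0 < α ∧ Integrable (fun ω => Φ (ξ ω / α)) P ∧ ∫ ω, Φ (ξ ω / α) ∂P ≤ 1}

/-- A probability density: nonnegative, integrable, integrating to 1. -/
def IsDensity {Ω : Type*} [MeasurableSpace Ω] (P : Measure Ω) (h : Ω → ℝ) : Prop :=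
  Measurable h ∧ (∀ ω, 0 ≤ h ω) ∧ Integrable h P ∧ ∫ ω, h ω ∂P = 1

/-- The risk measure `ρ(η) = sup_{h ∈ S} E[η h]` on random variables. -/
def rho {Ω : Type*} [MeasurableSpace Ω] (P : Measure Ω) (S : Set (Ω → ℝ)) (η : Ω → ℝ) : ℝ :=
  sSup ((fun h => ∫ ω, η ω * h ω ∂P) '' S)

/-- The (right-continuous-inverse) quantile function `q(x) = inf {u : F(u) > x}`. -/
def quantile (ν : Measure ℝ) (x : ℝ) : ℝ :=
  sInf {u : ℝ | x < (ν (Set.Iic u)).toReal}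

/-- Lebesgue measure on the unit interval (0,1). -/
def P01 : Measure ℝ := volume.restrict (Set.Ioo (0:ℝ) 1)

/-- The increasing rearrangement of a function on (0,1): the quantile of its law. -/
def rearrange (h : ℝ → ℝ) : ℝ → ℝ := quantile (Measure.map h P01)

/-- The law-invariant risk measure on laws: `ρ(ν) = sup_{h ∈ S} ∫₀¹ q_ν h*`. -/
def rhoLaw (S : Set (ℝ → ℝ)) (ν : Measure ℝ) : ℝ :=
  sSup ((fun h => ∫ u in Set.Ioo (0:ℝ) 1, quantile ν u * rearrange h u) '' S)

/-- Weak (weak-star) convergence of measures on ℝ, tested against bounded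
continuous functions. -/
def WeakTendsto (μs : ℕ → Measure ℝ) (ν : Measure ℝ) : Prop :=
  ∀ g : BoundedContinuousFunction ℝ ℝ,
    Filter.Tendsto (fun n => ∫ x, g x ∂(μs n)) Filter.atTop (nhds (∫ x, g x ∂ν))

/-- The empirical measure `(1/N) ∑_{n<N} δ_{x n}`. -/
def empMeasure (x : ℕ → ℝ) (N : ℕ) : Measure ℝ :=
  ((N : ENNReal)⁻¹) • ∑ n ∈ Finset.range N, Measure.dirac (x n)

/-- Ando's condition: `lim_{λ→∞} sup_{h ∈ A} λ E[Φ(h/λ)] = 0`. -/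
def AndoCondition {Ω : Type*} [MeasurableSpace Ω] (Φ : ℝ → ℝ) (P : Measure Ω)
    (A : Set (Ω → ℝ)) : Prop :=
  Filter.Tendsto (fun lam : ℝ => sSup ((fun h => lam * ∫ ω, Φ (h ω / lam) ∂P) '' A))
    Filter.atTop (nhds 0)

/-- The pairing map `h ↦ (g ↦ E[h g])` against a set `G` of test functions. -/
def pairingMap {Ω : Type*} [MeasurableSpace Ω] (P : Measure Ω) (G : Set (Ω → ℝ))
    (h : Ω → ℝ) : G → ℝ := fun g => ∫ ω, h ω * g.1 ω ∂P

/-- The weak topology `σ(·, G)` on functions, induced by the pairings against `G`. -/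
def weakTopology {Ω : Type*} [MeasurableSpace Ω] (P : Measure Ω) (G : Set (Ω → ℝ)) :
    TopologicalSpace (Ω → ℝ) :=
  TopologicalSpace.induced (pairingMap P G) Pi.topologicalSpace

/-!
Since `Φ` is even and convex, `Φ (k |a - b|) ≤ Φ (2k |a|) + Φ (2k |b|)`, so `Φ (k |q_n - q|)` is
dominated by `Φ (2k |q_n|) + Φ (2k |q|)`. These dominating functions converge a.e. and in integral,
hence in `L¹` by Scheffé's lemma, so they are uniformly integrable; domination passes uniform
integrability on to `Φ (k |q_n - q|)`, which tends to `0` a.e., and Vitali's theorem gives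
convergence to `0` in `L¹`. Quantile functions are monotone on `(0, 1)`, hence measurable there.
-/

open scoped ENNReal

namespace IsYoung

variable {Φ : ℝ → ℝ}

theorem nonneg (hΦ : IsYoung Φ) (x : ℝ) : 0 ≤ Φ x := by
  rcases eq_or_ne x 0 with rfl | hx
  · exact hΦ.2.2.1.ge
  · exact (hΦ.2.2.2.1 x hx).le

theorem continuous (hΦ : IsYoung Φ) : Continuous Φ :=
  continuousOn_univ.1 (hΦ.2.1.continuousOn isOpen_univ)

theorem apply_abs (hΦ : IsYoung Φ) (x : ℝ) : Φ |x| = Φ x := by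
  rcases abs_choice x with h | h <;> simp only [h, hΦ.1]

theorem apply_mul_abs (hΦ : IsYoung Φ) (c x : ℝ) : Φ (c * |x|) = Φ (c * x) := by
  rw [← hΦ.apply_abs (c * |x|), ← hΦ.apply_abs (c * x), abs_mul, abs_mul, abs_abs]

theorem apply_mul_abs_eq_add (hΦ : IsYoung Φ) (c x : ℝ) :
    Φ (c * |x|) = Φ (c * max x 0) + Φ (c * max (-x) 0) := by
  rcases le_total 0 x with hx | hx
  · rw [abs_of_nonneg hx, max_eq_left hx, max_eq_right (neg_nonpos.2 hx), mul_zero, hΦ.2.2.1,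
      add_zero]
  · rw [abs_of_nonpos hx, max_eq_right hx, max_eq_left (neg_nonneg.2 hx), mul_zero, hΦ.2.2.1,
      zero_add]

theorem apply_sub_le (hΦ : IsYoung Φ) (x y : ℝ) : Φ (x - y) ≤ Φ (2 * x) + Φ (2 * y) := by
  have hmid : x - y = (1 / 2 : ℝ) • (2 * x) + (1 / 2 : ℝ) • (-(2 * y)) := by
    simp only [smul_eq_mul]; ring
  have hconv := hΦ.2.1.2 (mem_univ (2 * x)) (mem_univ (-(2 * y))) (by norm_num : (0 : ℝ) ≤ 1 / 2)
    (by norm_num : (0 : ℝ) ≤ 1 / 2) (by norm_num)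
  rw [hmid]
  simp only [smul_eq_mul, hΦ.1] at hconv ⊢
  linarith [hΦ.nonneg (2 * x), hΦ.nonneg (2 * y)]

theorem apply_mul_abs_sub_le (hΦ : IsYoung Φ) (k a b : ℝ) :
    Φ (k * |a - b|) ≤ Φ (2 * k * |a|) + Φ (2 * k * |b|) := by
  rw [hΦ.apply_mul_abs, hΦ.apply_mul_abs, hΦ.apply_mul_abs, mul_sub, mul_assoc, mul_assoc]
  exact hΦ.apply_sub_le (k * a) (k * b)

end IsYoung

theorem monotoneOn_quantile (ν : Measure ℝ) [IsProbabilityMeasure ν] :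
    MonotoneOn (quantile ν) (Ioo 0 1) := by
  have hF : ∀ u, (ν (Iic u)).toReal = ProbabilityTheory.cdf ν u := fun u =>
    (ProbabilityTheory.cdf_eq_real ν u).symm
  intro x hx y hy hxy
  simp only [quantile, hF]
  refine csInf_le_csInf ?_ ?_ fun u hu => hxy.trans_lt hu
  · obtain ⟨b, hb⟩ := eventually_atBot.1
      ((ProbabilityTheory.tendsto_cdf_atBot ν).eventually_lt_const hx.1)
    refine ⟨b, fun u hu => le_of_not_gt fun hub => ?_⟩
    exact (hb u hub.le).not_gt hu
  · obtain ⟨b, hb⟩ := eventually_atTop.1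
      ((ProbabilityTheory.tendsto_cdf_atTop ν).eventually_const_lt hy.2)
    exact ⟨b, hb b le_rfl⟩

theorem aemeasurable_quantile (ν : Measure ℝ) [IsProbabilityMeasure ν] :
    AEMeasurable (quantile ν) P01 :=
  aemeasurable_restrict_of_monotoneOn measurableSet_Ioo (monotoneOn_quantile ν)

instance isProbabilityMeasure_P01 : IsProbabilityMeasure P01 := ⟨by simp [P01]⟩

section

variable {α : Type*} [MeasurableSpace α] {μ : Measure α}

theorem MeasureTheory.UnifIntegrable.of_norm_le {ι β γ : Type*} [NormedAddCommGroup β]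
    [NormedAddCommGroup γ] {p : ℝ≥0∞} {f : ι → α → β} {g : ι → α → γ} (hg : UnifIntegrable g p μ)
    (hfg : ∀ i, ∀ᵐ x ∂μ, ‖f i x‖ ≤ ‖g i x‖) : UnifIntegrable f p μ := by
  intro ε hε
  obtain ⟨δ, hδ, hgδ⟩ := hg hε
  refine ⟨δ, hδ, fun i s hs hμs => (eLpNorm_mono_ae ?_).trans (hgδ i s hs hμs)⟩
  filter_upwards [hfg i] with x hx
  by_cases hxs : x ∈ s <;> simp [hxs, hx]

/-- Scheffé's lemma. -/
theorem tendsto_eLpNorm_one_sub_of_tendsto_integral {G : ℕ → α → ℝ} {g : α → ℝ}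
    (hG_nonneg : ∀ n, 0 ≤ᵐ[μ] G n) (hG_int : ∀ n, Integrable (G n) μ) (hg_int : Integrable g μ)
    (hG_ae : ∀ᵐ x ∂μ, Tendsto (fun n => G n x) atTop (𝓝 (g x)))
    (hG_integral : Tendsto (fun n => ∫ x, G n x ∂μ) atTop (𝓝 (∫ x, g x ∂μ))) :
    Tendsto (fun n => eLpNorm (G n - g) 1 μ) atTop (𝓝 0) := by
  set D : ℕ → α → ℝ := fun n x => max (g x - G n x) 0
  have hD_int : ∀ n, Integrable (D n) μ := fun n =>
    (hg_int.sub (hG_int n)).sup (integrable_zero _ _ μ)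
  have hD : Tendsto (fun n => ∫ x, D n x ∂μ) atTop (𝓝 0) := by
    have hdom := tendsto_integral_of_dominated_convergence (F := D) (f := 0) (fun x => ‖g x‖)
      (fun n => (hD_int n).aestronglyMeasurable) hg_int.norm (fun n => ?_) ?_
    · simpa using hdom
    · filter_upwards [hG_nonneg n] with x (hx : 0 ≤ G n x)
      rw [Real.norm_of_nonneg (le_max_right _ _), Real.norm_eq_abs]
      exact max_le (by linarith [le_abs_self (g x), hx]) (abs_nonneg _)
    · filter_upwards [hG_ae] with x hx
      simpa [D] using ((tendsto_const_nhds (x := g x)).sub hx).max (tendsto_const_nhds (x := 0))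
  have hsplit : ∀ n, ∫ x, ‖(G n - g) x‖ ∂μ =
      (∫ x, G n x ∂μ - ∫ x, g x ∂μ) + 2 * ∫ x, D n x ∂μ := by
    intro n
    calc ∫ x, ‖(G n - g) x‖ ∂μ = ∫ x, ((G n x - g x) + 2 * D n x) ∂μ := by
          refine integral_congr_ae (Eventually.of_forall fun x => ?_)
          simp only [D, Pi.sub_apply, Real.norm_eq_abs]
          rcases le_total (G n x) (g x) with h | h
          · rw [abs_of_nonpos (by linarith), max_eq_left (by linarith)]; ring
          · rw [abs_of_nonneg (by linarith), max_eq_right (by linarith)]; ring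
      _ = _ := by
          rw [integral_add (f := fun x => G n x - g x) ((hG_int n).sub hg_int)
            ((hD_int n).const_mul 2), integral_sub (hG_int n) hg_int, integral_const_mul]
  have hnorm : Tendsto (fun n => ∫ x, ‖(G n - g) x‖ ∂μ) atTop (𝓝 0) := by
    simp only [hsplit]
    simpa using (hG_integral.sub_const (∫ x, g x ∂μ)).add (hD.const_mul 2)
  have hL1 : ∀ n, eLpNorm (G n - g) 1 μ = ENNReal.ofReal (∫ x, ‖(G n - g) x‖ ∂μ) := fun n => by
    rw [eLpNorm_one_eq_lintegral_enorm, ofReal_integral_norm_eq_lintegral_enorm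
      ((hG_int n).sub hg_int)]
  simpa only [hL1, ENNReal.ofReal_zero] using ENNReal.tendsto_ofReal hnorm

theorem unifIntegrable_and_tendsto_integral_zero_of_norm_le [IsFiniteMeasure μ]
    {f G : ℕ → α → ℝ} {g : α → ℝ} (hf_meas : ∀ n, AEStronglyMeasurable (f n) μ)
    (hf_le : ∀ n, ∀ᵐ x ∂μ, ‖f n x‖ ≤ ‖G n x + g x‖)
    (hf_ae : ∀ᵐ x ∂μ, Tendsto (fun n => f n x) atTop (𝓝 0))
    (hG_nonneg : ∀ n, 0 ≤ᵐ[μ] G n) (hG_int : ∀ n, Integrable (G n) μ) (hg_int : Integrable g μ)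
    (hG_ae : ∀ᵐ x ∂μ, Tendsto (fun n => G n x) atTop (𝓝 (g x)))
    (hG_integral : Tendsto (fun n => ∫ x, G n x ∂μ) atTop (𝓝 (∫ x, g x ∂μ))) :
    UnifIntegrable f 1 μ ∧ Tendsto (fun n => ∫ x, f n x ∂μ) atTop (𝓝 0) := by
  have hG_UI : UnifIntegrable (G + fun _ => g) 1 μ :=
    (unifIntegrable_of_tendsto_Lp le_rfl ENNReal.one_ne_top
      (fun n => memLp_one_iff_integrable.2 (hG_int n)) (memLp_one_iff_integrable.2 hg_int)
      (tendsto_eLpNorm_one_sub_of_tendsto_integral hG_nonneg hG_int hg_int hG_ae hG_integral)).add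
      (unifIntegrable_const le_rfl ENNReal.one_ne_top (memLp_one_iff_integrable.2 hg_int)) le_rfl
      (fun n => (hG_int n).aestronglyMeasurable) (fun _ => hg_int.aestronglyMeasurable)
  have hf_UI : UnifIntegrable f 1 μ := hG_UI.of_norm_le hf_le
  have hf_L1 : Tendsto (fun n => eLpNorm (f n - 0) 1 μ) atTop (𝓝 0) :=
    tendsto_Lp_finite_of_tendsto_ae le_rfl ENNReal.one_ne_top hf_meas MemLp.zero hf_UI hf_ae
  have hf_int : ∀ n, Integrable (f n) μ := fun n =>
    ((hG_int n).add hg_int).mono (hf_meas n) (hf_le n)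
  refine ⟨hf_UI, ?_⟩
  simpa using tendsto_integral_of_L1' 0 aestronglyMeasurable_const
    (Eventually.of_forall hf_int) hf_L1

end

theorem scheffe_uniform_integrability_quantiles_general
    (Φ : ℝ → ℝ) (hΦ : IsYoung Φ)
    (μs : ℕ → Measure ℝ) (ν : Measure ℝ)
    [∀ n, IsProbabilityMeasure (μs n)] [IsProbabilityMeasure ν]
    (k : ℝ)
    (hae : ∀ᵐ u ∂P01,
      Filter.Tendsto (fun n => quantile (μs n) u) Filter.atTop (nhds (quantile ν u)))
    (hintlim : Integrable (fun u =>
      Φ (2 * k * max (quantile ν u) 0) + Φ (2 * k * max (-(quantile ν u)) 0)) P01)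
    (hintn : ∀ n, Integrable (fun u =>
      Φ (2 * k * max (quantile (μs n) u) 0) + Φ (2 * k * max (-(quantile (μs n) u)) 0)) P01)
    (hmom : Filter.Tendsto
      (fun n => ∫ u in Set.Ioo (0:ℝ) 1,
        (Φ (2 * k * max (quantile (μs n) u) 0) + Φ (2 * k * max (-(quantile (μs n) u)) 0)))
      Filter.atTop
      (nhds (∫ u in Set.Ioo (0:ℝ) 1,
        (Φ (2 * k * max (quantile ν u) 0) + Φ (2 * k * max (-(quantile ν u)) 0))))) :
    (∃ n₀ : ℕ, UnifIntegrable
      (fun (n : ℕ) (u : ℝ) => Φ (k * |quantile (μs (n + n₀)) u - quantile ν u|)) 1 P01) ∧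
    Filter.Tendsto
      (fun n => ∫ u in Set.Ioo (0:ℝ) 1, Φ (k * |quantile (μs n) u - quantile ν u|))
      Filter.atTop (nhds 0) := by
  simp only [← hΦ.apply_mul_abs_eq_add] at hintlim hintn hmom
  set f : ℕ → ℝ → ℝ := fun n u => Φ (k * |quantile (μs n) u - quantile ν u|)
  set G : ℕ → ℝ → ℝ := fun n u => Φ (2 * k * |quantile (μs n) u|)
  set g : ℝ → ℝ := fun u => Φ (2 * k * |quantile ν u|)
  have hf_meas : ∀ n, AEStronglyMeasurable (f n) P01 := fun n =>
    (hΦ.continuous.measurable.comp_aemeasurable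
      ((((aemeasurable_quantile (μs n)).sub (aemeasurable_quantile ν)).norm).const_mul k)
      ).aestronglyMeasurable
  have hf_le : ∀ n u, ‖f n u‖ ≤ ‖G n u + g u‖ := fun n u => by
    rw [Real.norm_of_nonneg (hΦ.nonneg _), Real.norm_of_nonneg
      (add_nonneg (hΦ.nonneg _) (hΦ.nonneg _))]
    exact hΦ.apply_mul_abs_sub_le k _ _
  have hf_ae : ∀ᵐ u ∂P01, Tendsto (fun n => f n u) atTop (𝓝 0) := by
    filter_upwards [hae] with u hu
    simpa [f, hΦ.2.2.1, Function.comp_def] using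
      (hΦ.continuous.tendsto _).comp (((hu.sub_const (quantile ν u)).abs).const_mul k)
  have hG_ae : ∀ᵐ u ∂P01, Tendsto (fun n => G n u) atTop (𝓝 (g u)) := by
    filter_upwards [hae] with u hu
    exact (hΦ.continuous.tendsto _).comp (hu.abs.const_mul (2 * k))
  obtain ⟨hf_UI, hf_integral⟩ := unifIntegrable_and_tendsto_integral_zero_of_norm_le hf_meas
    (fun n => ae_of_all _ (hf_le n)) hf_ae (fun n => ae_of_all _ fun u => hΦ.nonneg _) hintn
    hintlim hG_ae hmom
  exact ⟨⟨0, hf_UI⟩, hf_integral⟩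

/-- Scheffé-type uniform integrability: a.e. convergence of quantiles with
convergence of split Orlicz moments gives uniform integrability of `Φ(k|q_n − q|)`
(from some index on) and `∫₀¹ Φ(k|q_n − q|) → 0`. -/
theorem scheffe_uniform_integrability_quantiles
    (Φ : ℝ → ℝ) (hΦ : IsYoung Φ)
    (μs : ℕ → Measure ℝ) (ν : Measure ℝ)
    [∀ n, IsProbabilityMeasure (μs n)] [IsProbabilityMeasure ν]
    (k : ℝ) (hk : 0 < k)
    (hae : ∀ᵐ u ∂P01,
      Filter.Tendsto (fun n => quantile (μs n) u) Filter.atTop (nhds (quantile ν u)))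
    (hintlim : Integrable (fun u =>
      Φ (2 * k * max (quantile ν u) 0) + Φ (2 * k * max (-(quantile ν u)) 0)) P01)
    (hintn : ∀ n, Integrable (fun u =>
      Φ (2 * k * max (quantile (μs n) u) 0) + Φ (2 * k * max (-(quantile (μs n) u)) 0)) P01)
    (hmom : Filter.Tendsto
      (fun n => ∫ u in Set.Ioo (0:ℝ) 1,
        (Φ (2 * k * max (quantile (μs n) u) 0) + Φ (2 * k * max (-(quantile (μs n) u)) 0)))
      Filter.atTop
      (nhds (∫ u in Set.Ioo (0:ℝ) 1,
        (Φ (2 * k * max (quantile ν u) 0) + Φ (2 * k * max (-(quantile ν u)) 0))))) :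
    (∃ n₀ : ℕ, UnifIntegrable
      (fun (n : ℕ) (u : ℝ) => Φ (k * |quantile (μs (n + n₀)) u - quantile ν u|)) 1 P01) ∧
    Filter.Tendsto
      (fun n => ∫ u in Set.Ioo (0:ℝ) 1, Φ (k * |quantile (μs n) u - quantile ν u|))
      Filter.atTop (nhds 0) :=
  scheffe_uniform_integrability_quantiles_general Φ hΦ μs ν k hae hintlim hintn hmom
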